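/- arXiv:2304.06651 — 3 statements merged into one kernel-verified Lean document; each statement's English description precedes it below -/
import Mathlib

section
/- Let G be a multigraph with k = min{δ(G)−1, ⌊ρ_c(G)⌋} and x ∈ V(G). Suppose U is an optimal set containing x of minimum size among all optimal sets containing x. Then for any optimal set U' with U ⊄ U', we have x ∉ U ∩ U'. In particular, any two distinct minimum-size optimal sets are vertex-disjoint. -/
noncomputable section

open Finset

attribute [local instance] Classical.propDecidable

/-- A loopless multigraph on vertex type `V` with edge type `E`:
each edge has a pair of distinct endpoints. -/
structure Multigraph (V : Type) (E : Type) where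
  ends : E → Sym2 V
  loopless : ∀ e, ¬ (ends e).IsDiag

namespace Multigraph

variable {V E : Type} [Fintype V] [Fintype E]

/-- Degree of a vertex: number of incident edges. -/
def degree (G : Multigraph V E) (v : V) : ℕ :=
  (univ.filter fun e => v ∈ G.ends e).card

/-- Minimum degree `δ(G)`. -/
def minDegree (G : Multigraph V E) : ℕ := sInf (Set.range G.degree)

/-- An edge cover: a set of edges saturating every vertex. -/
def IsEdgeCover (G : Multigraph V E) (F : Finset E) : Prop :=
  ∀ v : V, ∃ e ∈ F, v ∈ G.ends e

/-- `E⁺(U)`: the set of edges incident to a vertex of `U`. -/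
def Eplus (G : Multigraph V E) (U : Finset V) : Finset E :=
  univ.filter fun e => ∃ v ∈ U, v ∈ G.ends e

/-- Edges with one endpoint in `A` and the other in `B`. -/
def edgesBetween (G : Multigraph V E) (A B : Finset V) : Finset E :=
  univ.filter fun e => ∃ a ∈ A, ∃ b ∈ B, G.ends e = s(a, b)

/-- Edges with both endpoints in `U`. -/
def edgesWithin (G : Multigraph V E) (U : Finset V) : Finset E :=
  univ.filter fun e => ∀ v ∈ G.ends e, v ∈ U

/-- A proper edge coloring with colors in `[1, m]`. -/
def IsProperEdgeColoring (G : Multigraph V E) (m : ℕ) (φ : E → ℕ) : Prop :=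
  (∀ e, 1 ≤ φ e ∧ φ e ≤ m) ∧
  ∀ e f, e ≠ f → (∃ v, v ∈ G.ends e ∧ v ∈ G.ends f) → φ e ≠ φ f

/-- The chromatic index `χ'(G)`. -/
def chromaticIndex (G : Multigraph V E) : ℕ :=
  sInf {m | ∃ φ : E → ℕ, G.IsProperEdgeColoring m φ}

/-- The set of colors in `[1, m]` missing at `v` under `φ`. -/
def missingColors (G : Multigraph V E) (m : ℕ) (φ : E → ℕ) (v : V) : Finset ℕ :=
  (Finset.Icc 1 m).filter fun c => ∀ e, v ∈ G.ends e → φ e ≠ c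

/-- `G` is `s`-dense: `|V| ≥ 3` is odd and `|E| = s(|V|-1)/2`. -/
def IsDense (G : Multigraph V E) (s : ℕ) : Prop :=
  Odd (Fintype.card V) ∧ 3 ≤ Fintype.card V ∧
    2 * Fintype.card E = s * (Fintype.card V - 1)

/-- `U` is optimal with respect to `k`: `|U| ≥ 3` is odd and `|E⁺(U)| = k(|U|+1)/2`. -/
def IsOptimal (G : Multigraph V E) (k : ℤ) (U : Finset V) : Prop :=
  Odd U.card ∧ 3 ≤ U.card ∧ 2 * ((G.Eplus U).card : ℤ) = k * (U.card + 1)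

/-- `k = min{δ(G) - 1, ⌊ρ_c(G)⌋}`, expressed without a junk value when no odd set of
size ≥ 3 exists (in that degenerate case `ρ_c(G) = ∞` and `k = δ(G) - 1`):
`k ≤ δ(G) - 1`, `k ≤ ⌊2|E⁺(U)|/(|U|+1)⌋` for every odd `U` with `|U| ≥ 3`, and
`k` equals one of the two bounds. -/
def IsMinParam (G : Multigraph V E) (k : ℤ) : Prop :=
  k ≤ (G.minDegree : ℤ) - 1 ∧
  (∀ U : Finset V, Odd U.card → 3 ≤ U.card →
    k * (U.card + 1) ≤ 2 * ((G.Eplus U).card : ℤ)) ∧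
  (k = (G.minDegree : ℤ) - 1 ∨
    ∃ U : Finset V, Odd U.card ∧ 3 ≤ U.card ∧
      2 * ((G.Eplus U).card : ℤ) < (k + 1) * (U.card + 1))

/-- Adjacency in the subgraph of edges colored `α` or `β`. -/
def KempeAdj (G : Multigraph V E) (φ : E → ℕ) (α β : ℕ) (u w : V) : Prop :=
  ∃ e, (φ e = α ∨ φ e = β) ∧ G.ends e = s(u, w)

/-- Reachability in the subgraph of edges colored `α` or `β`
(i.e. being in the same `(α,β)`-Kempe chain). -/
def KempeReach (G : Multigraph V E) (φ : E → ℕ) (α β : ℕ) : V → V → Prop :=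
  Relation.ReflTransGen (G.KempeAdj φ α β)

/-- Degree of `v` in the subgraph of edges colored `α` or `β`. -/
def kempeDegree (G : Multigraph V E) (φ : E → ℕ) (α β : ℕ) (v : V) : ℕ :=
  (univ.filter fun e => (φ e = α ∨ φ e = β) ∧ v ∈ G.ends e).card

/-- Adjacency of vertices. -/
def Adj (G : Multigraph V E) (u w : V) : Prop := ∃ e, G.ends e = s(u, w)

/-- Reachability (being in the same connected component). -/
def Reach (G : Multigraph V E) : V → V → Prop := Relation.ReflTransGen G.Adj

end Multigraph

section Aux

variable {V E : Type} [Fintype V] [Fintype E]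

lemma eplus_card_eq_sum (G : Multigraph V E) (A : Finset V) :
    (G.Eplus A).card = ∑ e : E, if ∃ v ∈ A, v ∈ G.ends e then 1 else 0 :=
  Finset.card_filter _ _

lemma degree_sum_eq (G : Multigraph V E) (S : Finset V) :
    ∑ v ∈ S, G.degree v = ∑ e : E, (S.filter fun v => v ∈ G.ends e).card := by
  simp only [Multigraph.degree, Finset.card_filter]
  rw [Finset.sum_comm]

lemma edge_endpoints (G : Multigraph V E) (e : E) :
    ∃ u v : V, u ≠ v ∧ G.ends e = s(u, v) := by
  obtain ⟨⟨u, v⟩, h⟩ := Quot.exists_rep (G.ends e)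
  refine ⟨u, v, ?_, h.symm⟩
  intro huv
  apply G.loopless e
  rw [← h, huv]
  exact Sym2.mk_isDiag_iff.2 rfl

lemma posi (G : Multigraph V E) (A B : Finset V) :
    (G.Eplus (A \ B)).card + (G.Eplus (B \ A)).card + ∑ v ∈ A ∩ B, G.degree v
      ≤ (G.Eplus A).card + (G.Eplus B).card := by
  rw [degree_sum_eq]
  simp only [eplus_card_eq_sum]
  rw [← Finset.sum_add_distrib, ← Finset.sum_add_distrib, ← Finset.sum_add_distrib]
  apply Finset.sum_le_sum
  intro e _
  obtain ⟨u, v, hne, he⟩ := edge_endpoints G e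
  have hmem : ∀ w : V, w ∈ G.ends e ↔ w = u ∨ w = v := by
    intro w; rw [he]; exact Sym2.mem_iff
  have hex : ∀ X : Finset V, (∃ w ∈ X, w ∈ G.ends e) ↔ (u ∈ X ∨ v ∈ X) := by
    intro X
    constructor
    · rintro ⟨w, hw, hw'⟩
      rcases (hmem w).1 hw' with rfl | rfl
      · exact Or.inl hw
      · exact Or.inr hw
    · rintro (h | h)
      · exact ⟨u, h, (hmem u).2 (Or.inl rfl)⟩
      · exact ⟨v, h, (hmem v).2 (Or.inr rfl)⟩
  have hcard : ((A ∩ B).filter fun w => w ∈ G.ends e).card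
      = (if u ∈ A ∩ B then 1 else 0) + (if v ∈ A ∩ B then 1 else 0) := by
    have heq : (A ∩ B).filter (fun w => w ∈ G.ends e) = ({u, v} : Finset V).filter (· ∈ A ∩ B) := by
      ext a
      simp only [Finset.mem_filter, Finset.mem_insert, Finset.mem_singleton, hmem]
      tauto
    rw [heq, Finset.filter_insert, Finset.filter_singleton]
    split_ifs with h1 h2 h2 <;>
      simp [Finset.card_insert_of_notMem, Finset.mem_filter, hne, h1, h2]
  rw [hcard]
  simp only [hex]
  by_cases h1 : u ∈ A <;> by_cases h2 : u ∈ B <;> by_cases h3 : v ∈ A <;> by_cases h4 : v ∈ B <;>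
    simp [h1, h2, h3, h4, Finset.mem_sdiff, Finset.mem_inter] <;> omega

lemma eplus_mono (G : Multigraph V E) {A B : Finset V} (h : A ⊆ B) :
    G.Eplus A ⊆ G.Eplus B := by
  intro e he
  simp only [Multigraph.Eplus, Finset.mem_filter] at he ⊢
  obtain ⟨_, w, hw, hw'⟩ := he
  exact ⟨Finset.mem_univ _, w, h hw, hw'⟩

lemma eplus_union (G : Multigraph V E) (A B : Finset V) :
    G.Eplus (A ∪ B) = G.Eplus A ∪ G.Eplus B := by
  ext e
  simp only [Multigraph.Eplus, Finset.mem_filter, Finset.mem_union, Finset.mem_univ, true_and]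
  constructor
  · rintro ⟨w, hw | hw, hw'⟩
    · exact Or.inl ⟨w, hw, hw'⟩
    · exact Or.inr ⟨w, hw, hw'⟩
  · rintro (⟨w, hw, hw'⟩ | ⟨w, hw, hw'⟩)
    · exact ⟨w, Or.inl hw, hw'⟩
    · exact ⟨w, Or.inr hw, hw'⟩

lemma submod (G : Multigraph V E) (A B : Finset V) :
    (G.Eplus (A ∪ B)).card + (G.Eplus (A ∩ B)).card
      ≤ (G.Eplus A).card + (G.Eplus B).card := by
  have h1 : G.Eplus (A ∩ B) ⊆ G.Eplus A ∩ G.Eplus B :=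
    Finset.subset_inter (eplus_mono G Finset.inter_subset_left)
      (eplus_mono G Finset.inter_subset_right)
  calc (G.Eplus (A ∪ B)).card + (G.Eplus (A ∩ B)).card
      ≤ (G.Eplus A ∪ G.Eplus B).card + (G.Eplus A ∩ G.Eplus B).card := by
        rw [eplus_union]
        exact Nat.add_le_add_left (Finset.card_le_card h1) _
    _ = (G.Eplus A).card + (G.Eplus B).card := Finset.card_union_add_card_inter _ _

lemma eplus_singleton (G : Multigraph V E) (x : V) :
    (G.Eplus {x}).card = G.degree x := by
  unfold Multigraph.Eplus Multigraph.degree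
  congr 1
  apply Finset.filter_congr
  intro e _
  simp

lemma deg_lb (G : Multigraph V E) {k : ℤ} (hk : G.IsMinParam k) (v : V) :
    k + 1 ≤ (G.degree v : ℤ) := by
  have h1 : G.minDegree ≤ G.degree v := Nat.sInf_le ⟨v, rfl⟩
  have h2 := hk.1
  have h3 : (G.minDegree : ℤ) ≤ (G.degree v : ℤ) := by exact_mod_cast h1
  linarith

lemma odd_bound (G : Multigraph V E) {k : ℤ} (hk : G.IsMinParam k) (T : Finset V)
    (hodd : Odd T.card) : k * (T.card + 1) ≤ 2 * ((G.Eplus T).card : ℤ) := by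
  by_cases h3 : 3 ≤ T.card
  · exact hk.2.1 T hodd h3
  · have h1 : T.card = 1 := by
      rw [Nat.odd_iff] at hodd; omega
    obtain ⟨y, hy⟩ := Finset.card_eq_one.1 h1
    have hd := deg_lb G hk y
    rw [hy, eplus_singleton]
    simp only [Finset.card_singleton]
    push_cast
    linarith

lemma main_lemma {V E : Type} [Fintype V] [Fintype E]
    (G : Multigraph V E) (k : ℤ) (hk : G.IsMinParam k)
    (x : V) (U : Finset V) (hU : G.IsOptimal k U) (hxU : x ∈ U)
    (hmin : ∀ W : Finset V, G.IsOptimal k W → x ∈ W → U.card ≤ W.card)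
    (U' : Finset V) (hU' : G.IsOptimal k U') (hns : ¬ U ⊆ U') : x ∉ U ∩ U' := by
  intro hx
  obtain ⟨hUodd, hU3, hUeq⟩ := hU
  obtain ⟨hU'odd, hU'3, hU'eq⟩ := hU'
  have hxS : x ∈ U ∩ U' := hx
  have hm1 : 1 ≤ (U ∩ U').card := Finset.card_pos.2 ⟨x, hx⟩
  obtain ⟨y, hyU, hyU'⟩ : ∃ y ∈ U, y ∉ U' := by
    by_contra h
    push_neg at h
    exact hns h
  have hSU : U ∩ U' ⊆ U := Finset.inter_subset_left
  have hSlt : (U ∩ U').card < U.card := by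
    apply Finset.card_lt_card
    refine ⟨hSU, fun h => hyU' ?_⟩
    exact (Finset.mem_inter.1 (h hyU)).2
  rcases Nat.even_or_odd (U ∩ U').card with hev | hodd
  · -- even intersection: posimodularity
    have hpq1 : (U \ U').card + (U ∩ U').card = U.card := Finset.card_sdiff_add_card_inter U U'
    have hpq2 : (U' \ U).card + (U ∩ U').card = U'.card := by
      rw [Finset.inter_comm]
      exact Finset.card_sdiff_add_card_inter U' U
    have hodd1 : Odd (U \ U').card := by
      rw [Nat.odd_iff] at hUodd ⊢
      rw [Nat.even_iff] at hev
      omega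
    have hodd2 : Odd (U' \ U).card := by
      rw [Nat.odd_iff] at hU'odd ⊢
      rw [Nat.even_iff] at hev
      omega
    have b1 := odd_bound G hk (U \ U') hodd1
    have b2 := odd_bound G hk (U' \ U) hodd2
    have hposi := posi G U U'
    have hdeg : (k + 1) * (U ∩ U').card ≤ ∑ v ∈ U ∩ U', (G.degree v : ℤ) := by
      calc (k + 1) * ((U ∩ U').card : ℤ) = ∑ _v ∈ U ∩ U', (k + 1) := by
            rw [Finset.sum_const, nsmul_eq_mul]; ring
        _ ≤ ∑ v ∈ U ∩ U', (G.degree v : ℤ) :=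
            Finset.sum_le_sum fun v _ => deg_lb G hk v
    have hposi' : ((G.Eplus (U \ U')).card : ℤ) + ((G.Eplus (U' \ U)).card : ℤ)
        + ∑ v ∈ U ∩ U', (G.degree v : ℤ) ≤ (G.Eplus U).card + (G.Eplus U').card := by
      exact_mod_cast hposi
    have hc1 : ((U \ U').card : ℤ) + (U ∩ U').card = U.card := by exact_mod_cast hpq1
    have hc2 : ((U' \ U).card : ℤ) + (U ∩ U').card = U'.card := by exact_mod_cast hpq2
    have hp1 : ((U \ U').card : ℤ) = (U.card : ℤ) - (U ∩ U').card := by linarith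
    have hp2 : ((U' \ U).card : ℤ) = (U'.card : ℤ) - (U ∩ U').card := by linarith
    rw [hp1] at b1
    rw [hp2] at b2
    have hm1' : (1 : ℤ) ≤ (U ∩ U').card := by exact_mod_cast hm1
    nlinarith [b1, b2, hposi', hdeg, hUeq, hU'eq, hm1']
  · -- odd intersection: submodularity
    have hcard : ((U ∪ U').card : ℤ) + ((U ∩ U').card : ℤ) = (U.card : ℤ) + (U'.card : ℤ) := by
      exact_mod_cast Finset.card_union_add_card_inter U U'
    have hun_odd : Odd (U ∪ U').card := by
      have h := Finset.card_union_add_card_inter U U'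
      rw [Nat.odd_iff] at hUodd hU'odd hodd ⊢
      omega
    have hun3 : 3 ≤ (U ∪ U').card :=
      le_trans hU3 (Finset.card_le_card Finset.subset_union_left)
    have bu := hk.2.1 (U ∪ U') hun_odd hun3
    have hsub : ((G.Eplus (U ∪ U')).card : ℤ) + ((G.Eplus (U ∩ U')).card : ℤ)
        ≤ ((G.Eplus U).card : ℤ) + ((G.Eplus U').card : ℤ) := by
      exact_mod_cast submod G U U'
    have huc : ((U ∪ U').card : ℤ) = (U.card : ℤ) + (U'.card : ℤ) - (U ∩ U').card := by
      linarith
    rw [huc] at bu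
    have key : 2 * ((G.Eplus (U ∩ U')).card : ℤ) ≤ k * ((U ∩ U').card + 1) := by
      nlinarith [bu, hsub, hUeq, hU'eq]
    by_cases hm : (U ∩ U').card = 1
    · obtain ⟨a, ha⟩ := Finset.card_eq_one.1 hm
      have hax : a = x := by
        have := hxS
        rw [ha, Finset.mem_singleton] at this
        exact this.symm
      have hd := deg_lb G hk x
      rw [ha, hax, eplus_singleton] at key
      simp only [Finset.card_singleton] at key
      push_cast at key
      linarith
    · have hm3 : 3 ≤ (U ∩ U').card := by
        rw [Nat.odd_iff] at hodd; omega
      have lb := hk.2.1 (U ∩ U') hodd hm3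
      have hopt : G.IsOptimal k (U ∩ U') := ⟨hodd, hm3, le_antisymm key lb⟩
      have := hmin (U ∩ U') hopt hxS
      omega

end Aux


/-- If `U` is an optimal set containing `x` of minimum size among all
optimal sets containing `x`, then for any optimal set `U'` with `U ⊄ U'` we have
`x ∉ U ∩ U'`. In particular, distinct minimum-size optimal sets are disjoint. -/
theorem optimal_sets_disjoint {V E : Type} [Fintype V] [Fintype E]
    (G : Multigraph V E) (k : ℤ) (hk : G.IsMinParam k)
    (x : V) (U : Finset V) (hU : G.IsOptimal k U) (hxU : x ∈ U)
    (hmin : ∀ W : Finset V, G.IsOptimal k W → x ∈ W → U.card ≤ W.card) :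
    (∀ U' : Finset V, G.IsOptimal k U' → ¬ U ⊆ U' → x ∉ U ∩ U') ∧
    (∀ U₁ U₂ : Finset V, G.IsOptimal k U₁ → G.IsOptimal k U₂ →
      (∀ W, G.IsOptimal k W → U₁.card ≤ W.card) →
      (∀ W, G.IsOptimal k W → U₂.card ≤ W.card) →
      U₁ ≠ U₂ → Disjoint U₁ U₂) := by
  constructor
  · exact fun U' hU' hns => main_lemma G k hk x U hU hxU hmin U' hU' hns
  · intro U₁ U₂ h1 h2 hmin1 hmin2 hne
    by_contra hnd
    obtain ⟨y, hy1, hy2⟩ := Finset.not_disjoint_iff.1 hnd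
    have hns : ¬ U₁ ⊆ U₂ := by
      intro hsub
      exact hne (Finset.eq_of_subset_of_card_le hsub (hmin2 U₁ h1))
    exact main_lemma G k hk y U₁ h1 hy1 (fun W hW _ => hmin1 W hW) U₂ h2 hns
      (Finset.mem_inter.2 ⟨hy1, hy2⟩)
end
end

section
/- Let G be a multigraph with k = min{δ(G)−1, ⌊ρ_c(G)⌋}, and let U, U' be optimal sets with |U∩U'| even and nonempty pieces L = U∖U', R = U'∖U both odd and nonempty. Then, assuming every odd set of size ≥ 3 satisfies |E⁺| ≥ k(|·|+1)/2 and δ(G) ≥ k+1, one derives the contradiction |E⁺(U)| + |E⁺(U')| ≥ k(|U|+1)/2 + k(|U'|+1)/2 + 1; hence no two optimal sets can intersect in a nonempty even set. -/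
noncomputable section

open Finset

attribute [local instance] Classical.propDecidable

/-!
Write `L = U \ U'`, `M = U ∩ U'`, `R = U' \ U`. Counting each edge by its two endpoints,
`|E⁺(U)| + |E⁺(U')| ≥ |E⁺(L)| + |E⁺(R)| + ∑_{x ∈ M} d(x)`. The odd nonempty sets `L` and `R`
satisfy `2|E⁺(·)| ≥ k(|·| + 1)` (for singletons this is `δ ≥ k + 1`), and `d(x) ≥ k + 1` on `M`.
Adding up leaves a surplus of `2|M| ≥ 2` over `k(|U| + 1) + k(|U'| + 1)`, which two optimal sets
cannot have. An even intersection of two odd sets makes both differences odd.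
-/

namespace Sym2

variable {α : Type*}

theorem exists_mem_mk_iff (S : Finset α) (a b : α) :
    (∃ v ∈ S, v ∈ s(a, b)) ↔ a ∈ S ∨ b ∈ S := by
  simp only [Sym2.mem_iff]
  constructor
  · rintro ⟨v, hv, rfl | rfl⟩ <;> simp [hv]
  · rintro (h | h) <;> exact ⟨_, h, by simp⟩

theorem card_filter_mem_mk {a b : α} (hab : a ≠ b) (S : Finset α) :
    #(S.filter (· ∈ s(a, b))) = (if a ∈ S then 1 else 0) + (if b ∈ S then 1 else 0) := by
  have hfilter : S.filter (· ∈ s(a, b)) = ({a, b} : Finset α).filter (· ∈ S) := by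
    ext x; simp only [mem_filter, Sym2.mem_iff, mem_insert, mem_singleton]; tauto
  rw [hfilter, filter_insert, filter_singleton]
  by_cases ha : a ∈ S <;> by_cases hb : b ∈ S <;> simp [ha, hb, hab]

theorem indicator_sdiff_add_indicator_sdiff_add_card_filter_inter_le {z : Sym2 α}
    (hz : ¬ z.IsDiag) (U U' : Finset α) :
    (if ∃ v ∈ U \ U', v ∈ z then 1 else 0) + (if ∃ v ∈ U' \ U, v ∈ z then 1 else 0) +
        #((U ∩ U').filter (· ∈ z)) ≤
      (if ∃ v ∈ U, v ∈ z then 1 else 0) + (if ∃ v ∈ U', v ∈ z then 1 else 0) := by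
  induction z using Sym2.ind with
  | h a b =>
    rw [card_filter_mem_mk (by simpa using hz)]
    simp only [exists_mem_mk_iff]
    simp only [mem_sdiff, mem_inter]
    by_cases ha : a ∈ U <;> by_cases ha' : a ∈ U' <;> by_cases hb : b ∈ U <;>
      by_cases hb' : b ∈ U' <;> simp [ha, ha', hb, hb']

end Sym2

namespace Multigraph

variable {V E : Type} [Fintype E]

theorem card_eplus_sdiff_add_card_eplus_sdiff_add_sum_degree_inter_le (G : Multigraph V E)
    (U U' : Finset V) :
    #(G.Eplus (U \ U')) + #(G.Eplus (U' \ U)) + ∑ x ∈ U ∩ U', G.degree x ≤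
      #(G.Eplus U) + #(G.Eplus U') := by
  have hEplus : ∀ S : Finset V,
      #(G.Eplus S) = ∑ e, if ∃ v ∈ S, v ∈ G.ends e then 1 else 0 :=
    fun S => card_filter _ _
  have hdegree : ∑ x ∈ U ∩ U', G.degree x = ∑ e, #((U ∩ U').filter (· ∈ G.ends e)) := by
    simp only [degree, card_filter]
    exact sum_comm
  simp only [hEplus, hdegree, ← sum_add_distrib]
  exact sum_le_sum fun e _ =>
    Sym2.indicator_sdiff_add_indicator_sdiff_add_card_filter_inter_le (G.loopless e) U U'

theorem card_eplus_singleton (G : Multigraph V E) (v : V) : #(G.Eplus {v}) = G.degree v := by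
  simp [Eplus, degree]

section LowerBounds

variable {G : Multigraph V E} {k : ℤ}
  (hlow : ∀ W : Finset V, Odd #W → 3 ≤ #W → k * (#W + 1) ≤ 2 * (#(G.Eplus W) : ℤ))
  (hdelta : ∀ v : V, k + 1 ≤ (G.degree v : ℤ))
include hlow hdelta

theorem mul_card_add_one_le_two_mul_card_eplus_of_odd {L : Finset V} (hodd : Odd #L)
    (hne : L.Nonempty) : k * (#L + 1) ≤ 2 * (#(G.Eplus L) : ℤ) := by
  rcases le_or_gt 3 #L with h3 | h3
  · exact hlow L hodd h3
  · obtain ⟨v, rfl⟩ : ∃ v, L = {v} := card_eq_one.mp (by obtain ⟨m, hm⟩ := hodd; omega)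
    rw [card_eplus_singleton, card_singleton]
    push_cast
    linarith [hdelta v]

theorem mul_card_add_one_add_two_le_two_mul_card_eplus_add {U U' : Finset V}
    (hMne : (U ∩ U').Nonempty) (hL : Odd #(U \ U')) (hLne : (U \ U').Nonempty)
    (hR : Odd #(U' \ U)) (hRne : (U' \ U).Nonempty) :
    k * (#U + 1) + k * (#U' + 1) + 2 ≤ 2 * ((#(G.Eplus U) : ℤ) + #(G.Eplus U')) := by
  have hLbound := mul_card_add_one_le_two_mul_card_eplus_of_odd hlow hdelta hL hLne
  have hRbound := mul_card_add_one_le_two_mul_card_eplus_of_odd hlow hdelta hR hRne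
  have hMdegree : (k + 1) * #(U ∩ U') ≤ ∑ x ∈ U ∩ U', (G.degree x : ℤ) := by
    simpa [mul_comm] using card_nsmul_le_sum (U ∩ U') _ _ fun x _ => hdelta x
  have hcount : (#(G.Eplus (U \ U')) : ℤ) + #(G.Eplus (U' \ U)) +
      ∑ x ∈ U ∩ U', (G.degree x : ℤ) ≤ #(G.Eplus U) + #(G.Eplus U') := by
    exact_mod_cast card_eplus_sdiff_add_card_eplus_sdiff_add_sum_degree_inter_le G U U'
  have hUcard : (#U : ℤ) = #(U \ U') + #(U ∩ U') := by
    exact_mod_cast (card_sdiff_add_card_inter U U').symm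
  have hU'card : (#U' : ℤ) = #(U' \ U) + #(U ∩ U') := by
    rw [inter_comm]; exact_mod_cast (card_sdiff_add_card_inter U' U).symm
  have hM : (1 : ℤ) ≤ #(U ∩ U') := by exact_mod_cast hMne.card_pos
  rw [hUcard, hU'card]
  linarith

end LowerBounds

end Multigraph

theorem Finset.odd_card_sdiff_of_even_card_inter {α : Type*} [DecidableEq α] {s t : Finset α}
    (hs : Odd #s) (hst : Even #(s ∩ t)) : Odd #(s \ t) := by
  rw [← card_sdiff_add_card_inter s t] at hs
  exact (Nat.odd_add.mp hs).mpr hst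

theorem optimal_even_intersection_contradiction_general {V E : Type} [Fintype E]
    (G : Multigraph V E) (k : ℤ)
    (U U' : Finset V)
    (hMne : (U ∩ U').Nonempty)
    (hL : Odd (U \ U').card) (hLne : (U \ U').Nonempty)
    (hR : Odd (U' \ U).card) (hRne : (U' \ U).Nonempty)
    (hlow : ∀ W : Finset V, Odd W.card → 3 ≤ W.card →
      k * (W.card + 1) ≤ 2 * ((G.Eplus W).card : ℤ))
    (hdelta : ∀ v : V, k + 1 ≤ (G.degree v : ℤ)) :
    k * (U.card + 1) + k * (U'.card + 1) + 2 ≤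
      2 * (((G.Eplus U).card : ℤ) + ((G.Eplus U').card : ℤ)) ∧
    ¬ ∃ W W' : Finset V, G.IsOptimal k W ∧ G.IsOptimal k W' ∧
        Even (W ∩ W').card ∧ (W ∩ W').Nonempty ∧
        (W \ W').Nonempty ∧ (W' \ W).Nonempty := by
  refine ⟨Multigraph.mul_card_add_one_add_two_le_two_mul_card_eplus_add hlow hdelta
    hMne hL hLne hR hRne, ?_⟩
  rintro ⟨W, W', ⟨hWodd, -, hWopt⟩, ⟨hW'odd, -, hW'opt⟩, hEven, hMne', hLne', hRne'⟩
  have hL' := Finset.odd_card_sdiff_of_even_card_inter hWodd hEven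
  have hR' := Finset.odd_card_sdiff_of_even_card_inter hW'odd (Finset.inter_comm W W' ▸ hEven)
  have := Multigraph.mul_card_add_one_add_two_le_two_mul_card_eplus_add hlow hdelta
    hMne' hL' hLne' hR' hRne'
  linarith

/-- Two optimal sets intersecting in a nonempty even set, with both
differences odd and nonempty, lead (using the co-density lower bound and `δ ≥ k+1`)
to `|E⁺(U)| + |E⁺(U')| ≥ k(|U|+1)/2 + k(|U'|+1)/2 + 1`; hence no two optimal sets can
intersect in a nonempty even set. -/
theorem optimal_even_intersection_contradiction {V E : Type} [Fintype V] [Fintype E]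
    (G : Multigraph V E) (k : ℤ) (hk : G.IsMinParam k)
    (U U' : Finset V) (hU : G.IsOptimal k U) (hU' : G.IsOptimal k U')
    (hM : Even (U ∩ U').card) (hMne : (U ∩ U').Nonempty)
    (hL : Odd (U \ U').card) (hLne : (U \ U').Nonempty)
    (hR : Odd (U' \ U).card) (hRne : (U' \ U).Nonempty)
    (hlow : ∀ W : Finset V, Odd W.card → 3 ≤ W.card →
      k * (W.card + 1) ≤ 2 * ((G.Eplus W).card : ℤ))
    (hdelta : ∀ v : V, k + 1 ≤ (G.degree v : ℤ)) :
    k * (U.card + 1) + k * (U'.card + 1) + 2 ≤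
      2 * (((G.Eplus U).card : ℤ) + ((G.Eplus U').card : ℤ)) ∧
    ¬ ∃ W W' : Finset V, G.IsOptimal k W ∧ G.IsOptimal k W' ∧
        Even (W ∩ W').card ∧ (W ∩ W').Nonempty ∧
        (W \ W').Nonempty ∧ (W' \ W).Nonempty :=
  optimal_even_intersection_contradiction_general G k U U' hMne hL hLne hR hRne hlow hdelta
end
end

section
/- Let H be a multigraph in which every vertex of a set V ⊆ V(H) has degree exactly k+1 and every vertex outside V has degree 1, and suppose H[V] together with the pendant edges admits a proper edge (k+2)-coloring with color classes M_1, …, M_{k+2}. If every vertex of V is missed by at most one of M_1, …, M_k, and the subgraph induced by M_{k+1} ∪ M_{k+2} can be oriented so that every vertex of V missed by exactly one of M_1,…,M_k has an incoming arc, then the edges of H can be partitioned (after augmenting M_1,…,M_k with edges of M_{k+1} ∪ M_{k+2}) into k edge-disjoint edge sets each saturating V. -/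
noncomputable section

open Finset

attribute [local instance] Classical.propDecidable

/-- Let every vertex of `Vs` have degree `k+1` in `H` and every vertex
outside `Vs` degree 1, and let `φ` be a proper edge `(k+2)`-coloring with color
classes `M_1, …, M_{k+2}`. If every vertex of `Vs` is missed by at most one of
`M_1, …, M_k`, and the subgraph induced by `M_{k+1} ∪ M_{k+2}` can be oriented so
that every vertex of `Vs` missed by exactly one of `M_1, …, M_k` has an incoming
arc, then there are `k` pairwise disjoint edge sets, each obtained by augmenting
some `M_i` with edges of `M_{k+1} ∪ M_{k+2}`, each saturating `Vs`. -/
theorem augment_matchings_to_covers {V E : Type} [Fintype V] [Fintype E]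
    (H : Multigraph V E) (k : ℕ) (Vs : Finset V)
    (hdegV : ∀ v ∈ Vs, H.degree v = k + 1)
    (hdegO : ∀ v : V, v ∉ Vs → H.degree v = 1)
    (φ : E → ℕ) (hφ : H.IsProperEdgeColoring (k + 2) φ)
    (hmiss : ∀ v ∈ Vs,
      ((Finset.Icc 1 k).filter fun c => ∀ e, v ∈ H.ends e → φ e ≠ c).card ≤ 1)
    (horient : ∃ head : E → V, (∀ e, head e ∈ H.ends e) ∧
      ∀ v ∈ Vs,
        ((Finset.Icc 1 k).filter fun c => ∀ e, v ∈ H.ends e → φ e ≠ c).card = 1 →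
        ∃ e, (φ e = k + 1 ∨ φ e = k + 2) ∧ head e = v) :
    ∃ N : Fin k → Finset E,
      (∀ i : Fin k, (Finset.univ.filter fun e => φ e = (i : ℕ) + 1) ⊆ N i) ∧
      (∀ i : Fin k, N i ⊆ Finset.univ.filter fun e =>
        φ e = (i : ℕ) + 1 ∨ φ e = k + 1 ∨ φ e = k + 2) ∧
      (∀ i j, i ≠ j → Disjoint (N i) (N j)) ∧
      (∀ i : Fin k, ∀ v ∈ Vs, ∃ e ∈ N i, v ∈ H.ends e) := by
  obtain ⟨head, hhead, hcov⟩ := horient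
  set miss : V → Finset ℕ := fun v =>
    (Finset.Icc 1 k).filter fun c => ∀ e, v ∈ H.ends e → φ e ≠ c with hmissdef
  refine ⟨fun i => Finset.univ.filter fun e =>
      φ e = (i : ℕ) + 1 ∨ ((φ e = k + 1 ∨ φ e = k + 2) ∧
        head e ∈ Vs ∧ ((i : ℕ) + 1) ∈ miss (head e) ∧ (miss (head e)).card = 1),
    ?_, ?_, ?_, ?_⟩
  · intro i e he
    simp only [Finset.mem_filter, Finset.mem_univ, true_and] at he ⊢
    exact Or.inl he
  · intro i e he
    simp only [Finset.mem_filter, Finset.mem_univ, true_and] at he ⊢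
    rcases he with h | ⟨h, _⟩ <;> tauto
  · intro i j hij
    rw [Finset.disjoint_left]
    intro e hi hj
    simp only [Finset.mem_filter, Finset.mem_univ, true_and] at hi hj
    have hik : (i : ℕ) + 1 ≤ k := i.isLt
    have hjk : (j : ℕ) + 1 ≤ k := j.isLt
    rcases hi with hi | ⟨hci, _, hiv, hcard⟩ <;>
      rcases hj with hj | ⟨hcj, _, hjv, hcard'⟩
    · exact hij (Fin.ext (by omega))
    · omega
    · omega
    · -- both i+1 and j+1 in miss (head e), card ≤ 1
      have : (i : ℕ) + 1 = (j : ℕ) + 1 := by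
        by_contra hne
        have : 2 ≤ (miss (head e)).card := by
          have : ({(i : ℕ) + 1, (j : ℕ) + 1} : Finset ℕ) ⊆ miss (head e) := by
            intro c hc
            simp only [Finset.mem_insert, Finset.mem_singleton] at hc
            rcases hc with rfl | rfl <;> assumption
          calc 2 = ({(i : ℕ) + 1, (j : ℕ) + 1} : Finset ℕ).card := by
                  rw [Finset.card_insert_of_notMem (by simpa using hne),
                    Finset.card_singleton]
               _ ≤ _ := Finset.card_le_card this
        omega
      exact hij (Fin.ext (by omega))
  · intro i v hv
    by_cases hc : ∃ e, v ∈ H.ends e ∧ φ e = (i : ℕ) + 1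
    · obtain ⟨e, hve, hφe⟩ := hc
      exact ⟨e, by simp [hφe], hve⟩
    · push_neg at hc
      have hik : (i : ℕ) + 1 ≤ k := i.isLt
      have hmem : ((i : ℕ) + 1) ∈ miss v := by
        simp only [hmissdef, Finset.mem_filter, Finset.mem_Icc]
        exact ⟨⟨by omega, hik⟩, hc⟩
      have hcard1 : (miss v).card = 1 := by
        have h1 : 1 ≤ (miss v).card := Finset.card_pos.mpr ⟨_, hmem⟩
        have h2 : (miss v).card ≤ 1 := hmiss v hv
        omega
      obtain ⟨e, hφe, hhe⟩ := hcov v hv hcard1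
      refine ⟨e, ?_, ?_⟩
      · simp only [Finset.mem_filter, Finset.mem_univ, true_and]
        exact Or.inr ⟨hφe, by rw [hhe]; exact hv, by rw [hhe]; exact hmem,
          by rw [hhe]; exact hcard1⟩
      · rw [← hhe]; exact hhead e
end
end
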